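/- For every natural number N, nonnegative real weights w : Fin N → ℝ, nonnegative real values b : Fin N → ℝ, real capacity W, and real threshold B*, the following are equivalent: (i) there exists a subset A of Fin N such that ∑_{i ∈ A} w i ≤ W and ∑_{i ∈ A} b i ≥ B*; (ii) there exists a subset A of Fin N such that ∑_{i ∈ A} w i ≤ W and ∑_{i ∉ A} (w i + b i) + ∑_{i ∈ A} w i ≤ (∑_{i} (w i + b i)) − B*. (This is the correctness of the paper's polynomial-time reduction from the 0-1 Knapsack Problem to the Transit Assignment and Scheduling Problem: in the constructed transit instance, an assignment serving the trips with indices in A by the electric bus and the rest by the liquid-fuel bus is feasible exactly when ∑_{i ∈ A} w i ≤ W, and its total energy cost equals ∑_{i ∉ A} (w i + b i) + ∑_{i ∈ A} w i.) -/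
import Mathlib

theorem knapsack_reduction_correct (N : ℕ) (w b : Fin N → ℝ)
    (hw : ∀ i, 0 ≤ w i) (hb : ∀ i, 0 ≤ b i) (W Bstar : ℝ) :
    (∃ A : Finset (Fin N), ∑ i ∈ A, w i ≤ W ∧ Bstar ≤ ∑ i ∈ A, b i) ↔
    (∃ A : Finset (Fin N), ∑ i ∈ A, w i ≤ W ∧
      ∑ i ∈ Aᶜ, (w i + b i) + ∑ i ∈ A, w i ≤ (∑ i, (w i + b i)) - Bstar) := by
  have key : ∀ A : Finset (Fin N),
      ∑ i ∈ Aᶜ, (w i + b i) + ∑ i ∈ A, w i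
        = (∑ i, (w i + b i)) - ∑ i ∈ A, b i := by
    intro A
    have h1 : ∑ i ∈ Aᶜ, (w i + b i) + ∑ i ∈ A, (w i + b i) = ∑ i, (w i + b i) :=
      Finset.sum_compl_add_sum A _
    have h2 : ∑ i ∈ A, (w i + b i) = ∑ i ∈ A, w i + ∑ i ∈ A, b i :=
      Finset.sum_add_distrib
    linarith
  constructor
  · rintro ⟨A, hA, hB⟩
    exact ⟨A, hA, by rw [key]; linarith⟩
  · rintro ⟨A, hA, hB⟩
    rw [key] at hB
    exact ⟨A, hA, by linarith⟩
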